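/- arXiv:2412.00092 — 5 statements merged into one kernel-verified Lean document; each statement's English description precedes it below -/
import Mathlib

section
/- Let K be a field, let R = K[x, y, z, w] be the polynomial ring in four variables over K, and let I = (xz, xw, yz, yw). Then for every natural number i, the Ext group Ext^i_R(R/I, R) is nonzero if and only if i ∈ {2, 3}. Equivalently, the deficiency modules K^j(R/I), whose underlying modules are Ext^{4−j}_R(R/I, R), are nonzero exactly for j ∈ {1, 2}. -/
/-!
The ideal `I = (xz, xw, yz, yw) = (x, y) ∩ (z, w)` defines two skew lines in `ℙ³`. Its quotient
has the explicit free resolution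
`0 → R → R⁴ → R⁴ → R → R/I → 0`,
with `d₁ = (xz, xw, yz, yw)`, `d₂` the matrix of the four linear syzygies and
`d₃ = (y, -w, z, -x)ᵀ`; exactness reduces to divisibility between distinct variables. Dualising
into `R`, the cohomology vanishes in degrees `0`, `1` (the cocycles of degree 1 are multiples of
`d₁`) and `≥ 4`, while `(x, 0, 0, y)` is a degree-2 cocycle that is not a coboundary and
`coker d₃ᵀ = R/(x, y, z, w) ≠ 0`.
-/

open MvPolynomial CategoryTheory

universe u v

namespace MvPolynomial

variable {σ R : Type*} [CommRing R]

theorem exists_eq_aeval_update_zero_add_X_mul [DecidableEq σ] (k : σ) (p : MvPolynomial σ R) :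
    ∃ c, p = aeval (Function.update X k 0) p + X k * c := by
  induction p using MvPolynomial.induction_on with
  | C a => exact ⟨0, by simp⟩
  | add p q hp hq =>
    obtain ⟨c, hc⟩ := hp
    obtain ⟨d, hd⟩ := hq
    exact ⟨c + d, by rw [map_add]; linear_combination hc + hd⟩
  | mul_X p j hp =>
    obtain ⟨c, hc⟩ := hp
    by_cases hj : j = k
    · subst hj
      exact ⟨p, by rw [map_mul, aeval_X, Function.update_self]; ring⟩
    · refine ⟨c * X j, ?_⟩
      rw [map_mul, aeval_X, Function.update_of_ne hj]
      linear_combination X j * hc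

variable [IsDomain R]

theorem exists_eq_X_mul_of_X_mul_eq_X_mul {i j : σ} (hij : i ≠ j) {a b : MvPolynomial σ R}
    (h : X i * a = X j * b) : ∃ c, a = X j * c ∧ b = X i * c := by
  have hdvd : X j ∣ X i * a := ⟨b, h⟩
  obtain ⟨c, rfl⟩ := ((X_prime (σ := σ) (R := R) (i := j)).dvd_or_dvd hdvd).resolve_left
    (by simpa using hij.symm)
  refine ⟨c, rfl, mul_left_cancel₀ (X_ne_zero j) ?_⟩
  linear_combination -h

theorem exists_of_X_mul_add_X_mul_eq_X_mul [DecidableEq σ] {i j k : σ} (hij : i ≠ j)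
    (hik : i ≠ k) (hjk : j ≠ k) {a b u : MvPolynomial σ R} (h : X i * a + X j * b = X k * u) :
    ∃ p a' b', a = X j * p + X k * a' ∧ b = -(X i * p) + X k * b' ∧
      u = X i * a' + X j * b' := by
  set f : MvPolynomial σ R →ₐ[R] MvPolynomial σ R := aeval (Function.update X k 0)
  have hf : X i * f a = X j * -f b := by
    have := congrArg f h
    simp only [f, map_add, map_mul, aeval_X, Function.update_self,
      Function.update_of_ne hik, Function.update_of_ne hjk, zero_mul] at this
    linear_combination this
  obtain ⟨p, hpa, hpb⟩ := exists_eq_X_mul_of_X_mul_eq_X_mul hij hf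
  obtain ⟨a', ha'⟩ := exists_eq_aeval_update_zero_add_X_mul k a
  obtain ⟨b', hb'⟩ := exists_eq_aeval_update_zero_add_X_mul k b
  have ha : a = X j * p + X k * a' := by rw [ha', ← hpa]
  have hb : b = -(X i * p) + X k * b' := by rw [hb']; linear_combination -hpb
  refine ⟨p, a', b', ha, hb, mul_left_cancel₀ (X_ne_zero k) ?_⟩
  rw [← h, ha, hb]
  ring

end MvPolynomial

namespace ChainComplex

variable {A : Type*} [CommRing A] (C : ChainComplex (ModuleCat A) ℕ) (N : ModuleCat A)

theorem linearYonedaObj_exactAt_zero_iff :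
    (C.linearYonedaObj A N).ExactAt 0 ↔
      ∀ φ : C.X 0 →ₗ[A] N, φ ∘ₗ (C.d 1 0).hom = 0 → φ = 0 := by
  rw [HomologicalComplex.exactAt_iff' _ 0 0 1 (by simp) (by simp),
    ShortComplex.moduleCat_exact_iff]
  have hd : (C.linearYonedaObj A N).d 0 0 = 0 := (C.linearYonedaObj A N).shape 0 0 (by simp)
  simp only [HomologicalComplex.shortComplexFunctor'_obj_f, hd]
  refine ⟨fun h φ hφ => ?_, fun h φ hφ => ⟨0, ?_⟩⟩
  · obtain ⟨ψ, hψ⟩ := h (ModuleCat.ofHom φ) (ModuleCat.hom_ext hφ)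
    have : ModuleCat.ofHom φ = 0 := hψ.symm.trans rfl
    exact congrArg ModuleCat.Hom.hom this
  · have := h φ.hom (congrArg ModuleCat.Hom.hom hφ)
    exact (ModuleCat.hom_ext (this.trans ModuleCat.hom_zero.symm)).symm

theorem linearYonedaObj_exactAt_succ_iff (n : ℕ) :
    (C.linearYonedaObj A N).ExactAt (n + 1) ↔
      ∀ φ : C.X (n + 1) →ₗ[A] N, φ ∘ₗ (C.d (n + 2) (n + 1)).hom = 0 →
        ∃ ψ : C.X n →ₗ[A] N, ψ ∘ₗ (C.d (n + 1) n).hom = φ := by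
  rw [HomologicalComplex.exactAt_iff' _ n (n + 1) (n + 2) (by simp) (by simp),
    ShortComplex.moduleCat_exact_iff]
  refine ⟨fun h φ hφ => ?_, fun h φ hφ => ?_⟩
  · obtain ⟨ψ, hψ⟩ := h (ModuleCat.ofHom φ) (ModuleCat.hom_ext hφ)
    exact ⟨ψ.hom, congrArg ModuleCat.Hom.hom hψ⟩
  · obtain ⟨ψ, hψ⟩ := h φ.hom (congrArg ModuleCat.Hom.hom hφ)
    exact ⟨ModuleCat.ofHom ψ, ModuleCat.hom_ext hψ⟩

end ChainComplex

namespace CategoryTheory.ProjectiveResolution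

variable {𝒞 : Type u} [Category.{v} 𝒞] [Abelian 𝒞]

noncomputable def ofExact {Z : 𝒞} (P : ChainComplex 𝒞 ℕ) [∀ n, Projective (P.X n)]
    (π : P.X 0 ⟶ Z) [Epi π] (hπ : P.d 1 0 ≫ π = 0)
    (hexact₀ : (ShortComplex.mk _ _ hπ).Exact) (hexact : ∀ n, P.ExactAt (n + 1)) :
    ProjectiveResolution Z where
  complex := P
  π := (ChainComplex.toSingle₀Equiv _ _).symm ⟨π, hπ⟩
  quasiIso := ⟨fun n => by
    cases n with
    | zero =>
      rw [ChainComplex.quasiIsoAt₀_iff, ShortComplex.quasiIso_iff_of_zeros']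
      · refine (ShortComplex.exact_and_epi_g_iff_of_iso ?_).2 ⟨hexact₀, ‹Epi π›⟩
        exact ShortComplex.isoMk (Iso.refl _) (Iso.refl _) (Iso.refl _)
          (by exact (Category.id_comp _).trans (Category.comp_id _).symm)
          (by
            erw [Category.id_comp, Category.comp_id]
            exact (ChainComplex.toSingle₀Equiv_symm_apply_f_zero π hπ).symm)
      · exact P.shape 0 0 (by simp)
      all_goals rfl
    | succ n =>
      rw [quasiIsoAt_iff_exactAt']
      · exact hexact n
      · apply ChainComplex.exactAt_succ_single_obj⟩

theorem nontrivial_ext_iff {A : Type u} [CommRing A] {M : ModuleCat.{u} A}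
    (P : ProjectiveResolution M) (N : ModuleCat.{u} A) (n : ℕ) :
    Nontrivial (((Ext A (ModuleCat A) n).obj (Opposite.op M)).obj N) ↔
      ¬ (P.complex.linearYonedaObj A N).ExactAt n := by
  rw [HomologicalComplex.exactAt_iff_isZero_homology, ← not_subsingleton_iff_nontrivial,
    ← ModuleCat.isZero_iff_subsingleton]
  exact not_congr ⟨fun h => h.of_iso (P.isoExt n N).symm, fun h => h.of_iso (P.isoExt n N)⟩

end CategoryTheory.ProjectiveResolution

namespace SkewLines

variable (K : Type*) [Field K]

local notation "R" => MvPolynomial (Fin 4) K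

noncomputable section

def ideal : Ideal R := Ideal.span {X 0 * X 2, X 0 * X 3, X 1 * X 2, X 1 * X 3}

def d₁ : (Fin 4 → R) →ₗ[R] R :=
  Fintype.linearCombination R ![X 0 * X 2, X 0 * X 3, X 1 * X 2, X 1 * X 3]

def d₂ : (Fin 4 → R) →ₗ[R] (Fin 4 → R) :=
  Matrix.toLin' !![X 3, X 1, 0, 0; -X 2, 0, X 1, 0; 0, -X 0, 0, X 3; 0, 0, -X 0, -X 2]

def d₃ : R →ₗ[R] (Fin 4 → R) := LinearMap.toSpanSingleton R _ ![X 1, -X 3, X 2, -X 0]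

variable {K}

theorem d₁_apply (v : Fin 4 → R) :
    d₁ K v = v 0 * (X 0 * X 2) + v 1 * (X 0 * X 3) + v 2 * (X 1 * X 2) + v 3 * (X 1 * X 3) := by
  simp [d₁, Fintype.linearCombination_apply, Fin.sum_univ_four]

theorem d₂_apply (v : Fin 4 → R) :
    d₂ K v = ![X 3 * v 0 + X 1 * v 1, -(X 2 * v 0) + X 1 * v 2,
      -(X 0 * v 1) + X 3 * v 3, -(X 0 * v 2) - X 2 * v 3] := by
  funext i
  fin_cases i <;> simp [d₂, Matrix.mulVec, dotProduct, Fin.sum_univ_four, sub_eq_add_neg]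

theorem d₃_apply (r : R) : d₃ K r = ![r * X 1, -(r * X 3), r * X 2, -(r * X 0)] := by
  funext i
  fin_cases i <;> simp [d₃]

theorem d₁_comp_d₂ : d₁ K ∘ₗ d₂ K = 0 := by
  refine LinearMap.ext fun v => ?_
  simp only [LinearMap.comp_apply, d₂_apply, d₁_apply, Matrix.cons_val, LinearMap.zero_apply]
  ring

theorem d₂_comp_d₃ : d₂ K ∘ₗ d₃ K = 0 := by
  refine LinearMap.ext fun r => funext fun i => ?_
  fin_cases i <;>
    simp only [Fin.zero_eta, Fin.mk_one, Fin.reduceFinMk, Fin.isValue, LinearMap.comp_apply,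
      d₃_apply, d₂_apply, Matrix.cons_val, LinearMap.zero_apply, Pi.zero_apply] <;> ring

theorem range_d₁ : LinearMap.range (d₁ K) = ideal K := by
  rw [d₁, Fintype.range_linearCombination, ideal]
  simp only [Matrix.range_cons, Matrix.range_empty, Set.union_empty, Set.singleton_union]

theorem exists_d₂_eq_of_d₁_eq_zero {v : Fin 4 → R} (hv : d₁ K v = 0) :
    ∃ u, d₂ K u = v := by
  rw [d₁_apply] at hv
  have h₀ : X 0 * (X 2 * v 0 + X 3 * v 1) = X 1 * -(X 2 * v 2 + X 3 * v 3) := by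
    linear_combination hv
  obtain ⟨u, hu₀, hu₁⟩ := exists_eq_X_mul_of_X_mul_eq_X_mul (by decide) h₀
  obtain ⟨p, a₁, b₁, ha₁, hb₁, hu⟩ :=
    exists_of_X_mul_add_X_mul_eq_X_mul (k := 1) (by decide) (by decide) (by decide) hu₀
  obtain ⟨q, a₀, b₀, ha₀, hb₀, hu'⟩ := exists_of_X_mul_add_X_mul_eq_X_mul (k := 0)
    (by decide) (by decide) (by decide)
    (show X 2 * v 2 + X 3 * v 3 = X 0 * -u by linear_combination -hu₁)
  obtain ⟨m, hm₀, hm₁⟩ := exists_eq_X_mul_of_X_mul_eq_X_mul (i := 2) (j := 3) (by decide)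
    (show X 2 * (a₁ + a₀) = X 3 * -(b₁ + b₀) by linear_combination -hu - hu')
  refine ⟨![p, a₁, b₁, q + X 0 * m], funext fun i => ?_⟩
  fin_cases i <;>
    simp only [Fin.zero_eta, Fin.mk_one, Fin.reduceFinMk, Fin.isValue, d₂_apply, Matrix.cons_val]
  · linear_combination -ha₁
  · linear_combination -hb₁
  · linear_combination -ha₀ - X 0 * hm₀
  · linear_combination -hb₀ + X 0 * hm₁

theorem exists_d₃_eq_of_d₂_eq_zero {v : Fin 4 → R} (hv : d₂ K v = 0) :
    ∃ r, d₃ K r = v := by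
  have h₀ := congrFun hv 0
  have h₁ := congrFun hv 1
  have h₂ := congrFun hv 2
  simp only [d₂_apply, Matrix.cons_val, Pi.zero_apply] at h₀ h₁ h₂
  obtain ⟨r, hr₀, hr₁⟩ := exists_eq_X_mul_of_X_mul_eq_X_mul (i := 3) (j := 1) (by decide)
    (show X 3 * v 0 = X 1 * -v 1 by linear_combination h₀)
  have hv₂ : v 2 = X 2 * r :=
    mul_left_cancel₀ (X_ne_zero 1) (by linear_combination h₁ + X 2 * hr₀)
  have hv₃ : v 3 = -(X 0 * r) :=
    mul_left_cancel₀ (X_ne_zero 3) (by linear_combination h₂ - X 0 * hr₁)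
  refine ⟨r, funext fun i => ?_⟩
  fin_cases i <;>
    simp only [Fin.zero_eta, Fin.mk_one, Fin.reduceFinMk, Fin.isValue, d₃_apply, Matrix.cons_val]
  · linear_combination -hr₀
  · linear_combination hr₁
  · linear_combination -hv₂
  · linear_combination -hv₃

theorem d₃_injective : Function.Injective (d₃ K) := by
  rw [← LinearMap.ker_eq_bot, LinearMap.ker_eq_bot']
  intro r hr
  simpa [d₃_apply] using congrFun hr 0

variable (K)

def resolutionObj : ℕ → ModuleCat R
  | 0 => ModuleCat.of R R
  | 1 | 2 => ModuleCat.of R (Fin 4 → R)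
  | 3 => ModuleCat.of R R
  | _ + 4 => ModuleCat.of R PUnit

def resolutionD : ∀ n, resolutionObj K (n + 1) ⟶ resolutionObj K n
  | 0 => ModuleCat.ofHom (d₁ K)
  | 1 => ModuleCat.ofHom (d₂ K)
  | 2 => ModuleCat.ofHom (d₃ K)
  | _ + 3 => 0

def resolution : ChainComplex (ModuleCat R) ℕ :=
  ChainComplex.of (resolutionObj K) (resolutionD K) fun
    | 0 => ModuleCat.hom_ext d₁_comp_d₂
    | 1 => ModuleCat.hom_ext d₂_comp_d₃
    | _ + 2 => Limits.zero_comp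

instance (n : ℕ) : Projective ((resolution K).X n) := by
  rcases n with _ | _ | _ | _ | n <;> dsimp [resolution, resolutionObj] <;> infer_instance

variable {K}

theorem resolution_exactAt_succ (n : ℕ) : (resolution K).ExactAt (n + 1) := by
  rw [HomologicalComplex.exactAt_iff' _ (n + 2) (n + 1) n (by simp) (by simp),
    ShortComplex.moduleCat_exact_iff]
  match n with
  | 0 => exact fun v hv => exists_d₂_eq_of_d₁_eq_zero hv
  | 1 => exact fun v hv => exists_d₃_eq_of_d₂_eq_zero hv
  | 2 => exact fun r hr => ⟨0, (d₃_injective (hr.trans (map_zero _).symm)).symm⟩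
  | _ + 3 => exact fun _ _ => ⟨0, rfl⟩

variable (K) in
def augmentation : (resolution K).X 0 ⟶ ModuleCat.of R (R ⧸ ideal K) :=
  ModuleCat.ofHom (ideal K).mkQ

instance : Epi (augmentation K) :=
  (ModuleCat.epi_iff_surjective _).2 (ideal K).mkQ_surjective

theorem resolution_d_comp_augmentation : (resolution K).d 1 0 ≫ augmentation K = 0 :=
  ModuleCat.hom_ext <| LinearMap.ext fun v =>
    (Submodule.Quotient.mk_eq_zero _).2 <|
      range_d₁ (K := K) ▸ LinearMap.mem_range_self (d₁ K) v

theorem exact_resolution_d_augmentation :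
    (ShortComplex.mk _ _ (resolution_d_comp_augmentation (K := K))).Exact := by
  rw [ShortComplex.moduleCat_exact_iff_range_eq_ker]
  exact range_d₁.trans (Submodule.ker_mkQ _).symm

variable (K) in
def projectiveResolution : ProjectiveResolution (ModuleCat.of R (R ⧸ ideal K)) :=
  .ofExact (resolution K) (augmentation K) resolution_d_comp_augmentation
    exact_resolution_d_augmentation resolution_exactAt_succ

theorem eq_zero_of_comp_d₁_eq_zero {φ : R →ₗ[R] R} (h : φ ∘ₗ d₁ K = 0) : φ = 0 := by
  have h₀ : φ (X 0 * X 2 * 1) = 0 := by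
    simpa [d₁_apply] using LinearMap.congr_fun h (Pi.single 0 1)
  rw [← smul_eq_mul, map_smul, smul_eq_mul] at h₀
  exact LinearMap.ext_ring <|
    (mul_eq_zero.1 h₀).resolve_left (mul_ne_zero (X_ne_zero 0) (X_ne_zero 2))

theorem exists_comp_d₁_eq_of_comp_d₂_eq_zero {φ : (Fin 4 → R) →ₗ[R] R}
    (h : φ ∘ₗ d₂ K = 0) :
    ∃ ψ : R →ₗ[R] R, ψ ∘ₗ d₁ K = φ := by
  obtain ⟨c, rfl⟩ := (LinearEquiv.piRing R R (Fin 4) R).symm.surjective φ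
  have e (j : Fin 4) := LinearMap.congr_fun h (Pi.single j 1)
  have e₀ : X 3 * c 0 = X 2 * c 1 := by
    simpa [LinearEquiv.piRing_symm_apply, Fin.sum_univ_four, d₂_apply, add_neg_eq_zero] using e 0
  have e₁ : X 1 * c 0 = X 0 * c 2 := by
    simpa [LinearEquiv.piRing_symm_apply, Fin.sum_univ_four, d₂_apply, add_neg_eq_zero] using e 1
  have e₂ : X 1 * c 1 = X 0 * c 3 := by
    simpa [LinearEquiv.piRing_symm_apply, Fin.sum_univ_four, d₂_apply, add_neg_eq_zero] using e 2
  obtain ⟨a, hc₀, hc₁⟩ := exists_eq_X_mul_of_X_mul_eq_X_mul (by decide) e₀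
  obtain ⟨s, hc₂, hs⟩ := exists_eq_X_mul_of_X_mul_eq_X_mul (i := 0) (j := 1) (by decide)
    (show X 0 * c 2 = X 1 * (X 2 * a) by rw [← e₁, hc₀])
  obtain ⟨t, ha, rfl⟩ := exists_eq_X_mul_of_X_mul_eq_X_mul (by decide) hs
  have hc₃ : c 3 = X 1 * X 3 * t :=
    mul_left_cancel₀ (X_ne_zero 0) (by linear_combination X 1 * hc₁ - e₂ + X 1 * X 3 * ha)
  refine ⟨LinearMap.mulRight R t, LinearMap.ext fun v => ?_⟩
  simp only [LinearMap.comp_apply, LinearMap.mulRight_apply, d₁_apply,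
    LinearEquiv.piRing_symm_apply, Fin.sum_univ_four, smul_eq_mul, hc₀, hc₁, hc₂, hc₃, ha]
  ring

theorem exists_comp_d₃_eq_zero_forall_comp_d₂_ne :
    ∃ φ : (Fin 4 → R) →ₗ[R] R, φ ∘ₗ d₃ K = 0 ∧
      ∀ ψ : (Fin 4 → R) →ₗ[R] R, ψ ∘ₗ d₂ K ≠ φ := by
  refine ⟨(LinearEquiv.piRing R R (Fin 4) R).symm ![X 0, 0, 0, X 1], ?_, fun ψ h => ?_⟩
  · refine LinearMap.ext fun r => ?_
    simp only [LinearMap.comp_apply, d₃_apply, LinearEquiv.piRing_symm_apply, Fin.sum_univ_four,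
      Matrix.cons_val, smul_eq_mul, LinearMap.zero_apply]
    ring
  · obtain ⟨c, rfl⟩ := (LinearEquiv.piRing R R (Fin 4) R).symm.surjective ψ
    have e : X 3 * c 0 - X 2 * c 1 = X 0 := by
      simpa [LinearEquiv.piRing_symm_apply, Fin.sum_univ_four, d₂_apply, sub_eq_add_neg] using
        LinearMap.congr_fun h (Pi.single 0 1)
    simpa using congrArg (eval (Pi.single 0 1)) e

theorem comp_d₃_ne_id (ψ : (Fin 4 → R) →ₗ[R] R) : ψ ∘ₗ d₃ K ≠ LinearMap.id := by
  intro h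
  obtain ⟨c, rfl⟩ := (LinearEquiv.piRing R R (Fin 4) R).symm.surjective ψ
  have e : X 1 * c 0 - X 3 * c 1 + X 2 * c 2 - X 0 * c 3 = 1 := by
    simpa [LinearEquiv.piRing_symm_apply, Fin.sum_univ_four, d₃_apply, sub_eq_add_neg] using
      LinearMap.congr_fun h 1
  simpa using congrArg constantCoeff e

theorem dual_exactAt_iff (i : ℕ) :
    ((resolution K).linearYonedaObj R (ModuleCat.of R R)).ExactAt i ↔ ¬(i = 2 ∨ i = 3) := by
  rcases i with _ | _ | _ | _ | n
  · refine iff_of_true ?_ (by decide)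
    rw [ChainComplex.linearYonedaObj_exactAt_zero_iff]
    exact fun φ => eq_zero_of_comp_d₁_eq_zero
  · refine iff_of_true ?_ (by decide)
    rw [ChainComplex.linearYonedaObj_exactAt_succ_iff]
    exact fun φ => exists_comp_d₁_eq_of_comp_d₂_eq_zero
  · refine iff_of_false ?_ (by decide)
    rw [ChainComplex.linearYonedaObj_exactAt_succ_iff]
    obtain ⟨φ, hφ, hne⟩ := exists_comp_d₃_eq_zero_forall_comp_d₂_ne (K := K)
    exact fun h => (h φ hφ).elim hne
  · refine iff_of_false ?_ (by decide)
    rw [ChainComplex.linearYonedaObj_exactAt_succ_iff]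
    exact fun h => (h LinearMap.id (LinearMap.ext fun _ => rfl)).elim comp_d₃_ne_id
  · refine iff_of_true ?_ (by omega)
    rw [ChainComplex.linearYonedaObj_exactAt_succ_iff]
    exact fun φ _ => ⟨0, LinearMap.ext fun _ => (map_zero φ).symm⟩

end

end SkewLines

/-- Let `R = K[x, y, z, w]` (with `x = X 0`, `y = X 1`, `z = X 2`, `w = X 3`) and
`I = (xz, xw, yz, yw)`. Then `Ext^i_R(R/I, R) ≠ 0` if and only if `i ∈ {2, 3}`;
equivalently, the deficiency modules `K^j(R/I) = Ext^{4-j}_R(R/I, R(-4))` are nonzero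
exactly for `j ∈ {1, 2}`. -/
theorem ext_nonzero_iff_monomial_example {K : Type*} [Field K] (i : ℕ) :
    Nontrivial
      (((Ext (MvPolynomial (Fin 4) K) (ModuleCat (MvPolynomial (Fin 4) K)) i).obj
          (Opposite.op (ModuleCat.of (MvPolynomial (Fin 4) K)
            (MvPolynomial (Fin 4) K ⧸ Ideal.span
              {(X 0 * X 2 : MvPolynomial (Fin 4) K), X 0 * X 3, X 1 * X 2, X 1 * X 3})))).obj
        (ModuleCat.of (MvPolynomial (Fin 4) K) (MvPolynomial (Fin 4) K))) ↔
      i = 2 ∨ i = 3 :=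
  ((SkewLines.projectiveResolution K).nontrivial_ext_iff _ i).trans
    ((not_congr (SkewLines.dual_exactAt_iff i)).trans not_not)
end

section
/- Let A = ℚ[x₁, …, x₆] be the polynomial ring in six variables over ℚ and let I = (x₁x₂ − x₄², x₂x₃ − x₅², x₄x₆, x₅x₆). Then I = P₁ ∩ P₂ ∩ P₃, where P₁ = (x₂x₃ − x₅², x₁x₂ − x₄², x₆), P₂ = (x₁, x₃, x₄, x₅), and P₃ = (x₂, x₄, x₅); moreover, each of P₁, P₂, P₃ is a prime ideal of A. -/
/-!
The ideals `P₂` and `P₃` are generated by variables, so they are kernels of the retractions that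
kill those variables. `P₁` is the kernel of the monomial map `x ↦ (s², t², u², st, tu, 0)`:
modulo `P₁` every monomial is congruent to one free of `x₆` in which `x₄` and `x₅` occur at most
once, and the map is injective on such monomials because the parities of the image exponents
recover the exponents of `x₄` and `x₅`. (In the code `xᵢ` is `X (i - 1)`.)

For the decomposition, write `f ∈ P₁ ∩ P₂ ∩ P₃` as `t + h x₆` with `t ∈ I`. As `I ⊆ P₂, P₃` and
`x₆ ∉ P₂, P₃`, primality puts `h` in `P₂ ∩ P₃`. Writing `h = e x₂ + k` with `k ∈ (x₄, x₅)`
forces `e ∈ P₂`, and both `x₂x₆P₂` and `x₆(x₄, x₅)` lie in `I`.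
-/

open MvPolynomial

namespace MvPolynomial

section Retraction

variable {R σ : Type*} [CommRing R]

theorem sub_aeval_mem {J : Ideal (MvPolynomial σ R)} {v : σ → MvPolynomial σ R}
    (hv : ∀ i, X i - v i ∈ J) (p : MvPolynomial σ R) : p - aeval v p ∈ J := by
  have hmk : (Ideal.Quotient.mkₐ R J).comp (aeval v) = Ideal.Quotient.mkₐ R J :=
    algHom_ext fun i => by simpa [Ideal.Quotient.eq] using (J.neg_mem_iff.2 (hv i))
  rw [← Ideal.Quotient.eq]
  exact (DFunLike.congr_fun hmk p).symm

theorem span_X_image_eq_ker_aeval (s : Set σ) [DecidablePred (· ∈ s)] :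
    Ideal.span (X '' s) = RingHom.ker
      (aeval fun i => if i ∈ s then 0 else X i :
        MvPolynomial σ R →ₐ[R] MvPolynomial σ R) := by
  refine le_antisymm (Ideal.span_le.2 ?_) fun p hp => ?_
  · rintro _ ⟨i, hi, rfl⟩
    simp [hi]
  · have hv : ∀ i, X i - (if i ∈ s then 0 else X i) ∈
        Ideal.span (X '' s : Set (MvPolynomial σ R)) := by
      intro i
      split_ifs with hi
      · simpa using Ideal.subset_span (Set.mem_image_of_mem X hi)
      · simp
    have h := sub_aeval_mem hv p
    rwa [RingHom.mem_ker.1 hp, sub_zero] at h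

theorem isPrime_span_X_image [IsDomain R] (s : Set σ) :
    (Ideal.span (X '' s : Set (MvPolynomial σ R))).IsPrime := by
  classical
  rw [span_X_image_eq_ker_aeval]
  exact RingHom.ker_isPrime _

theorem X_notMem_span_X_image [Nontrivial R] {s : Set σ} {i : σ} (hi : i ∉ s) :
    (X i : MvPolynomial σ R) ∉ Ideal.span (X '' s) := by
  simp only [mem_ideal_span_X_image, support_X, Finset.mem_singleton, forall_eq, ne_eq, not_exists,
    not_and, not_not]
  intro j hj
  exact Finsupp.single_eq_of_ne (ne_of_mem_of_not_mem hj hi)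

end Retraction

section NormalForm

theorem eq_zero_of_mem_restrictSupport_of_map_eq_zero {R σ τ : Type*} [CommSemiring R]
    {φ : MvPolynomial σ R →ₗ[R] MvPolynomial τ R} {N : Set (σ →₀ ℕ)}
    {ι : (σ →₀ ℕ) → τ →₀ ℕ} (hι : Set.InjOn ι N)
    (hφ : ∀ m ∈ N, ∀ c, φ (monomial m c) = monomial (ι m) c)
    {q : MvPolynomial σ R} (hq : q ∈ restrictSupport R N) (hφq : φ q = 0) : q = 0 := by
  classical
  ext m
  by_cases hm : m ∈ q.support
  · have hcoeff : coeff (ι m) (φ q) = coeff m q := by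
      conv_lhs => rw [as_sum q]
      rw [map_sum, coeff_sum, Finset.sum_eq_single m]
      · rw [hφ m (hq hm), coeff_monomial, if_pos rfl]
      · intro k hk hkm
        rw [hφ k (hq hk), coeff_monomial, if_neg fun h => hkm (hι (hq hk) (hq hm) h)]
      · exact absurd hm
    rw [← hcoeff, hφq, coeff_zero, coeff_zero]
  · rw [notMem_support_iff.1 hm, coeff_zero]

variable {R σ : Type*} [CommRing R]

theorem exists_mem_restrictSupport_sub_mem {J : Ideal (MvPolynomial σ R)} {N : Set (σ →₀ ℕ)}
    (h : ∀ m, ∃ q ∈ restrictSupport R N, monomial m 1 - q ∈ J) (p : MvPolynomial σ R) :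
    ∃ q ∈ restrictSupport R N, p - q ∈ J := by
  induction p using MvPolynomial.induction_on' with
  | monomial m c =>
    obtain ⟨q, hq, hmq⟩ := h m
    refine ⟨c • q, Submodule.smul_mem _ c hq, ?_⟩
    simpa [smul_eq_C_mul, mul_sub, C_mul_monomial] using J.mul_mem_left (C c) hmq
  | add p p' hp hp' =>
    obtain ⟨q, hq, hpq⟩ := hp
    obtain ⟨q', hq', hpq'⟩ := hp'
    exact ⟨q + q', add_mem hq hq', by simpa [add_sub_add_comm] using add_mem hpq hpq'⟩

end NormalForm

end MvPolynomial

theorem RingHom.ker_eq_of_forall_exists_sub_mem {A B F : Type*} [CommRing A] [Ring B]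
    [FunLike F A B] [RingHomClass F A B] (f : F) {J : Ideal A} {M : Set A}
    (hJ : J ≤ RingHom.ker f) (hnf : ∀ p, ∃ q ∈ M, p - q ∈ J)
    (hM : ∀ q ∈ M, f q = 0 → q = 0) :
    RingHom.ker f = J := by
  refine le_antisymm (fun p hp => ?_) hJ
  obtain ⟨q, hq, hpq⟩ := hnf p
  have hfq : f q = 0 := by
    simpa [RingHom.mem_ker.1 hp, RingHom.mem_ker.1 (hJ hpq)] using (map_sub f p q).symm
  simpa [hM q hq hfq] using hpq

noncomputable section

namespace ToricFaceRing

variable (R : Type*) [CommRing R]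

def I : Ideal (MvPolynomial (Fin 6) R) :=
  Ideal.span {X 0 * X 1 - X 3 ^ 2, X 1 * X 2 - X 4 ^ 2, X 3 * X 5, X 4 * X 5}

def P₁ : Ideal (MvPolynomial (Fin 6) R) :=
  Ideal.span {X 1 * X 2 - X 4 ^ 2, X 0 * X 1 - X 3 ^ 2, X 5}

def P₂ : Ideal (MvPolynomial (Fin 6) R) := Ideal.span {X 0, X 2, X 3, X 4}

def P₃ : Ideal (MvPolynomial (Fin 6) R) := Ideal.span {X 1, X 3, X 4}

def toricMap : MvPolynomial (Fin 6) R →ₐ[R] MvPolynomial (Fin 3) R :=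
  aeval ![X 0 ^ 2, X 1 ^ 2, X 2 ^ 2, X 0 * X 1, X 1 * X 2, 0]

def toricExponent (m : Fin 6 →₀ ℕ) : Fin 3 →₀ ℕ :=
  Finsupp.equivFunOnFinite.symm ![2 * m 0 + m 3, 2 * m 1 + m 3 + m 4, 2 * m 2 + m 4]

def reducedExponents : Set (Fin 6 →₀ ℕ) := {m | m 3 ≤ 1 ∧ m 4 ≤ 1 ∧ m 5 = 0}

def reduce (m : Fin 6 →₀ ℕ) : Fin 6 →₀ ℕ :=
  Finsupp.equivFunOnFinite.symm
    ![m 0 + m 3 / 2, m 1 + m 3 / 2 + m 4 / 2, m 2 + m 4 / 2, m 3 % 2, m 4 % 2, m 5]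

variable {R}

theorem monomial_eq_prod_fin_six (m : Fin 6 →₀ ℕ) (c : R) :
    monomial m c =
      C c * (X 0 ^ m 0 * X 1 ^ m 1 * X 2 ^ m 2 * X 3 ^ m 3 * X 4 ^ m 4 * X 5 ^ m 5) := by
  rw [monomial_eq, Finsupp.prod_fintype _ _ fun _ => pow_zero _, Fin.prod_univ_six]

theorem toricMap_monomial {m : Fin 6 →₀ ℕ} (hm : m 5 = 0) (c : R) :
    toricMap R (monomial m c) = monomial (toricExponent m) c := by
  rw [monomial_eq_prod_fin_six, monomial_eq, Finsupp.prod_fintype _ _ fun _ => pow_zero _,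
    Fin.prod_univ_three, hm]
  simp only [toricMap, aeval_eq_bind₁, pow_zero, mul_one, map_mul, algHom_C, algebraMap_eq,
    map_pow, bind₁_X_right, Matrix.cons_val_zero, Matrix.cons_val_one, Matrix.cons_val,
    toricExponent, Finsupp.equivFunOnFinite_symm_apply_apply]
  ring

theorem injOn_toricExponent : Set.InjOn toricExponent reducedExponents := by
  intro m ⟨hm₃, hm₄, hm₅⟩ m' ⟨hm₃', hm₄', hm₅'⟩ h
  have h₀ := DFunLike.congr_fun h 0
  have h₁ := DFunLike.congr_fun h 1
  have h₂ := DFunLike.congr_fun h 2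
  simp only [toricExponent, Finsupp.equivFunOnFinite_symm_apply_apply, Matrix.cons_val_zero,
    Matrix.cons_val_one, Matrix.cons_val] at h₀ h₁ h₂
  ext i
  fin_cases i <;> simp <;> omega

theorem monomial_sub_monomial_reduce_mem {J : Ideal (MvPolynomial (Fin 6) R)}
    (h₁ : X 0 * X 1 - X 3 ^ 2 ∈ J) (h₂ : X 1 * X 2 - X 4 ^ 2 ∈ J) (m : Fin 6 →₀ ℕ) :
    monomial m 1 - monomial (reduce m) 1 ∈ J := by
  rw [← Ideal.Quotient.eq_zero_iff_mem] at h₁ h₂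
  rw [← Ideal.Quotient.eq, monomial_eq_prod_fin_six, monomial_eq_prod_fin_six]
  simp only [C_1, one_mul, map_mul, map_pow, reduce, Finsupp.equivFunOnFinite_symm_apply_apply,
    Matrix.cons_val_zero, Matrix.cons_val_one, Matrix.cons_val]
  simp only [map_sub, map_mul, map_pow, sub_eq_zero] at h₁ h₂
  conv_lhs => rw [← Nat.div_add_mod (m 3) 2, ← Nat.div_add_mod (m 4) 2]
  rw [pow_add, pow_add, pow_mul, pow_mul, ← h₁, ← h₂]
  ring

theorem exists_reduced_sub_mem_P₁ (m : Fin 6 →₀ ℕ) :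
    ∃ q ∈ restrictSupport R reducedExponents, monomial m 1 - q ∈ P₁ R := by
  by_cases hm : m 5 = 0
  · refine ⟨monomial (reduce m) 1, ?_, monomial_sub_monomial_reduce_mem
      (Ideal.subset_span (by simp)) (Ideal.subset_span (by simp)) m⟩
    rw [monomial_mem_restrictSupport]
    left
    simp only [reducedExponents, reduce, Set.mem_ofPred_eq,
      Finsupp.equivFunOnFinite_symm_apply_apply, Matrix.cons_val]
    omega
  · refine ⟨0, zero_mem _, ?_⟩
    rw [sub_zero]
    exact Ideal.mem_of_dvd _ (X_dvd_monomial.2 (Or.inr hm)) (Ideal.subset_span (by simp))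

theorem P₁_le_ker_toricMap : P₁ R ≤ RingHom.ker (toricMap R) := by
  simp only [P₁, Ideal.span_le, Set.insert_subset_iff, Set.singleton_subset_iff, SetLike.mem_coe,
    RingHom.mem_ker, map_sub, map_mul, map_pow, toricMap, aeval_X, Matrix.cons_val_zero,
    Matrix.cons_val_one, Matrix.cons_val]
  exact ⟨by ring, by ring, trivial⟩

theorem ker_toricMap : RingHom.ker (toricMap R) = P₁ R :=
  RingHom.ker_eq_of_forall_exists_sub_mem _ P₁_le_ker_toricMap
    (exists_mem_restrictSupport_sub_mem exists_reduced_sub_mem_P₁)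
    fun _ hq => eq_zero_of_mem_restrictSupport_of_map_eq_zero (φ := (toricMap R).toLinearMap)
      injOn_toricExponent (fun _ hm => toricMap_monomial hm.2.2) hq

theorem isPrime_P₁ [IsDomain R] : (P₁ R).IsPrime := by
  rw [← ker_toricMap]
  exact RingHom.ker_isPrime _

theorem P₂_eq_span_X_image : P₂ R = Ideal.span (X '' {0, 2, 3, 4}) := by
  simp [P₂, Set.image_insert_eq]

theorem P₃_eq_span_X_image : P₃ R = Ideal.span (X '' {1, 3, 4}) := by
  simp [P₃, Set.image_insert_eq]

theorem isPrime_P₂ [IsDomain R] : (P₂ R).IsPrime := by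
  rw [P₂_eq_span_X_image]
  exact isPrime_span_X_image _

theorem isPrime_P₃ [IsDomain R] : (P₃ R).IsPrime := by
  rw [P₃_eq_span_X_image]
  exact isPrime_span_X_image _

theorem X_one_notMem_P₂ [Nontrivial R] : X 1 ∉ P₂ R :=
  P₂_eq_span_X_image (R := R) ▸ X_notMem_span_X_image (by decide)

theorem X_five_notMem_P₂ [Nontrivial R] : X 5 ∉ P₂ R :=
  P₂_eq_span_X_image (R := R) ▸ X_notMem_span_X_image (by decide)

theorem X_five_notMem_P₃ [Nontrivial R] : X 5 ∉ P₃ R :=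
  P₃_eq_span_X_image (R := R) ▸ X_notMem_span_X_image (by decide)

theorem I_le_P₁ : I R ≤ P₁ R := by
  rw [← ker_toricMap]
  simp only [I, Ideal.span_le, Set.insert_subset_iff, Set.singleton_subset_iff, SetLike.mem_coe,
    RingHom.mem_ker, map_sub, map_mul, map_pow, toricMap, aeval_X, Matrix.cons_val_zero,
    Matrix.cons_val_one, Matrix.cons_val]
  exact ⟨by ring, by ring, mul_zero _, mul_zero _⟩

theorem I_le_P₂ : I R ≤ P₂ R := by
  classical
  rw [P₂_eq_span_X_image, span_X_image_eq_ker_aeval]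
  simp [I, Ideal.span_le, Set.insert_subset_iff]

theorem I_le_P₃ : I R ≤ P₃ R := by
  classical
  rw [P₃_eq_span_X_image, span_X_image_eq_ker_aeval]
  simp [I, Ideal.span_le, Set.insert_subset_iff]

theorem exists_eq_add_mul_X_five_of_mem_P₁ {f : MvPolynomial (Fin 6) R} (hf : f ∈ P₁ R) :
    ∃ t ∈ I R, ∃ h, f = t + h * X 5 := by
  obtain ⟨a, z, hz, rfl⟩ := Ideal.mem_span_insert.1 hf
  obtain ⟨b, h, rfl⟩ := Ideal.mem_span_pair.1 hz
  refine ⟨a * (X 1 * X 2 - X 4 ^ 2) + b * (X 0 * X 1 - X 3 ^ 2), ?_, h, by ring⟩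
  exact add_mem (Ideal.mul_mem_left _ _ (Ideal.subset_span (by simp)))
    (Ideal.mul_mem_left _ _ (Ideal.subset_span (by simp)))

theorem P₂_le_colon_I : P₂ R ≤ (I R).colon {X 1 * X 5} := by
  have hg : ∀ g ∈ ({X 0 * X 1 - X 3 ^ 2, X 1 * X 2 - X 4 ^ 2, X 3 * X 5, X 4 * X 5} :
      Set (MvPolynomial (Fin 6) R)), g ∈ I R := fun g hg => Ideal.subset_span hg
  simp only [P₂, Ideal.span_le, Set.insert_subset_iff, Set.singleton_subset_iff, SetLike.mem_coe,
    Submodule.mem_colon_singleton, smul_eq_mul]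
  refine ⟨?_, ?_, ?_, ?_⟩
  · rw [show (X 0 * (X 1 * X 5) : MvPolynomial (Fin 6) R) =
        X 5 * (X 0 * X 1 - X 3 ^ 2) + X 3 * (X 3 * X 5) by ring]
    exact add_mem (Ideal.mul_mem_left _ _ (hg _ (by simp)))
      (Ideal.mul_mem_left _ _ (hg _ (by simp)))
  · rw [show (X 2 * (X 1 * X 5) : MvPolynomial (Fin 6) R) =
        X 5 * (X 1 * X 2 - X 4 ^ 2) + X 4 * (X 4 * X 5) by ring]
    exact add_mem (Ideal.mul_mem_left _ _ (hg _ (by simp)))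
      (Ideal.mul_mem_left _ _ (hg _ (by simp)))
  · rw [show (X 3 * (X 1 * X 5) : MvPolynomial (Fin 6) R) = X 1 * (X 3 * X 5) by ring]
    exact Ideal.mul_mem_left _ _ (hg _ (by simp))
  · rw [show (X 4 * (X 1 * X 5) : MvPolynomial (Fin 6) R) = X 1 * (X 4 * X 5) by ring]
    exact Ideal.mul_mem_left _ _ (hg _ (by simp))

theorem mul_X_five_mem_I [IsDomain R] {h : MvPolynomial (Fin 6) R} (h₂ : h ∈ P₂ R)
    (h₃ : h ∈ P₃ R) : h * X 5 ∈ I R := by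
  obtain ⟨e, k, hk, rfl⟩ := Ideal.mem_span_insert.1 h₃
  have hk₂ : k ∈ P₂ R := Ideal.span_mono (by simp [Set.insert_subset_iff]) hk
  have he : e ∈ P₂ R :=
    (isPrime_P₂.mem_or_mem (by simpa using sub_mem h₂ hk₂)).resolve_right X_one_notMem_P₂
  have hkX : k * X 5 ∈ I R := by
    have : Ideal.span {X 3, X 4} ≤ (I R).colon {X 5} := by
      simp only [Ideal.span_le, Set.insert_subset_iff, Set.singleton_subset_iff,
        SetLike.mem_coe, Submodule.mem_colon_singleton, smul_eq_mul]
      exact ⟨Ideal.subset_span (by simp), Ideal.subset_span (by simp)⟩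
    simpa using this hk
  rw [add_mul, mul_assoc]
  exact add_mem (by simpa using P₂_le_colon_I he) hkX

theorem inf_le_I [IsDomain R] : P₁ R ⊓ P₂ R ⊓ P₃ R ≤ I R := by
  rintro f ⟨⟨hf₁, hf₂⟩, hf₃⟩
  obtain ⟨t, ht, h, rfl⟩ := exists_eq_add_mul_X_five_of_mem_P₁ hf₁
  have hP : ∀ P : Ideal (MvPolynomial (Fin 6) R), P.IsPrime → I R ≤ P → X 5 ∉ P →
      t + h * X 5 ∈ P → h ∈ P := fun P hP hIP hX hf =>
    (hP.mem_or_mem (by simpa using sub_mem hf (hIP ht))).resolve_right hX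
  exact add_mem ht (mul_X_five_mem_I (hP _ isPrime_P₂ I_le_P₂ X_five_notMem_P₂ hf₂)
    (hP _ isPrime_P₃ I_le_P₃ X_five_notMem_P₃ hf₃))

theorem I_eq_inf [IsDomain R] : I R = P₁ R ⊓ P₂ R ⊓ P₃ R :=
  le_antisymm (le_inf (le_inf I_le_P₁ I_le_P₂) I_le_P₃) inf_le_I

end ToricFaceRing

end

/-- Let `A = ℚ[x₁, …, x₆]` (with `xᵢ = X (i-1)`) and
`I = (x₁x₂ − x₄², x₂x₃ − x₅², x₄x₆, x₅x₆)`. Then `I = P₁ ∩ P₂ ∩ P₃` where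
`P₁ = (x₂x₃ − x₅², x₁x₂ − x₄², x₆)`, `P₂ = (x₁, x₃, x₄, x₅)` and `P₃ = (x₂, x₄, x₅)`,
and each of `P₁`, `P₂`, `P₃` is prime. -/
theorem toric_face_ring_prime_decomposition :
    Ideal.span {(X 0 * X 1 - X 3 ^ 2 : MvPolynomial (Fin 6) ℚ),
        X 1 * X 2 - X 4 ^ 2, X 3 * X 5, X 4 * X 5} =
      Ideal.span {(X 1 * X 2 - X 4 ^ 2 : MvPolynomial (Fin 6) ℚ),
          X 0 * X 1 - X 3 ^ 2, X 5} ⊓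
        Ideal.span {(X 0 : MvPolynomial (Fin 6) ℚ), X 2, X 3, X 4} ⊓
        Ideal.span {(X 1 : MvPolynomial (Fin 6) ℚ), X 3, X 4} ∧
    (Ideal.span {(X 1 * X 2 - X 4 ^ 2 : MvPolynomial (Fin 6) ℚ),
        X 0 * X 1 - X 3 ^ 2, X 5}).IsPrime ∧
    (Ideal.span {(X 0 : MvPolynomial (Fin 6) ℚ), X 2, X 3, X 4}).IsPrime ∧
    (Ideal.span {(X 1 : MvPolynomial (Fin 6) ℚ), X 3, X 4}).IsPrime :=
  ⟨ToricFaceRing.I_eq_inf, ToricFaceRing.isPrime_P₁, ToricFaceRing.isPrime_P₂,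
    ToricFaceRing.isPrime_P₃⟩
end

section
/- The ideal (x₁x₂ − x₄², x₂x₃ − x₅²) of the polynomial ring ℚ[x₁, …, x₅] in five variables over ℚ is a prime ideal. -/
/-!
The ideal is the kernel of the monomial map `ℚ[x₁, …, x₅] → ℚ[a, b, c]` sending
`x₁, x₂, x₃, x₄, x₅` (here `X 0, …, X 4`) to `a², b², c², ab, bc`, hence prime since `ℚ[a, b, c]`
is a domain.
Modulo the ideal, rewriting `x₄² ↦ x₁x₂` and `x₅² ↦ x₂x₃` reduces every polynomial to one of
degree at most one in `x₄` and `x₅`. The monomial `xˢ` maps to `a^(2s₁+s₄) b^(2s₂+s₄+s₅) c^(2s₃+s₅)`,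
and when `s₄, s₅ ≤ 1` these exponents determine `s` (read `s₄`, `s₅` off the parities), so the map
is injective on reduced polynomials and its kernel is no larger than the ideal.
-/

open MvPolynomial

theorem Ideal.eq_ker_of_forall_exists_sub_mem {R S F : Type*} [CommRing R] [Ring S]
    [FunLike F R S] [RingHomClass F R S] (f : F) {I : Ideal R} (N : Set R)
    (hI : I ≤ RingHom.ker f) (hN : ∀ r ∈ N, f r = 0 → r = 0)
    (hrep : ∀ p, ∃ r ∈ N, p - r ∈ I) : I = RingHom.ker f := by
  refine le_antisymm hI fun p hp => ?_
  obtain ⟨r, hrN, hpr⟩ := hrep p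
  have hr : f r = 0 := by simpa [RingHom.mem_ker.mp hp] using hI hpr
  simpa [hN r hrN hr] using hpr

namespace MvPolynomial

section MonomialMap

variable {σ τ R : Type*} [CommSemiring R] (v : σ → τ →₀ ℕ)

theorem aeval_monomial_monomial (s : σ →₀ ℕ) (c : R) :
    aeval (fun i => monomial (v i) (1 : R)) (monomial s c) =
      monomial (Finsupp.linearCombination ℕ v s) c := by
  rw [aeval_monomial, algebraMap_eq, Finsupp.linearCombination_apply,
    monomial_finsupp_sum_index]
  simp only [monomial_pow, one_pow]

theorem coeff_aeval_monomial_of_injOn {S : Set (σ →₀ ℕ)}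
    (hS : S.InjOn (Finsupp.linearCombination ℕ v)) {p : MvPolynomial σ R}
    (hp : p ∈ restrictSupport R S) {s : σ →₀ ℕ} (hs : s ∈ S) :
    coeff (Finsupp.linearCombination ℕ v s) (aeval (fun i => monomial (v i) (1 : R)) p) =
      coeff s p := by
  classical
  conv_lhs => rw [p.as_sum]
  simp only [map_sum, aeval_monomial_monomial, coeff_sum, coeff_monomial]
  rw [Finset.sum_eq_single s, if_pos rfl]
  · exact fun t ht hts => if_neg fun h => hts (hS (hp ht) hs h)
  · intro hs'
    rw [if_pos rfl, notMem_support_iff.mp hs']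

theorem eq_zero_of_aeval_monomial_eq_zero {S : Set (σ →₀ ℕ)}
    (hS : S.InjOn (Finsupp.linearCombination ℕ v)) {p : MvPolynomial σ R}
    (hp : p ∈ restrictSupport R S) (h : aeval (fun i => monomial (v i) (1 : R)) p = 0) :
    p = 0 := by
  ext s
  by_cases hs : s ∈ S
  · rw [← coeff_aeval_monomial_of_injOn v hS hp hs, h, coeff_zero, coeff_zero]
  · exact notMem_support_iff.mp fun h' => hs (hp h')

end MonomialMap

section Reduction

variable {σ R : Type*} [CommRing R]

theorem monomial_add_sub_monomial_add_mem {I : Ideal (MvPolynomial σ R)} {a b : σ →₀ ℕ}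
    (h : monomial a 1 - monomial b 1 ∈ I) (t : σ →₀ ℕ) (c : R) :
    monomial (t + a) c - monomial (t + b) c ∈ I := by
  rw [← mul_one c, ← monomial_mul, ← monomial_mul, ← mul_sub]
  exact I.mul_mem_left _ h

/-- Strong induction on the degree in the variables of `J`: since `b` avoids `J`, each rewrite
`X j ^ 2 ↦ monomial b 1` lowers it by two. -/
theorem exists_sub_mem_restrictSupport_of_sq_sub_monomial_mem {I : Ideal (MvPolynomial σ R)}
    (J : Finset σ)
    (hJ : ∀ j ∈ J, ∃ b : σ →₀ ℕ, (∀ k ∈ J, b k = 0) ∧ X j ^ 2 - monomial b 1 ∈ I)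
    (p : MvPolynomial σ R) :
    ∃ r ∈ restrictSupport R {s | ∀ j ∈ J, s j ≤ 1}, p - r ∈ I := by
  classical
  induction p using induction_on' with
  | monomial s c =>
    induction hn : ∑ j ∈ J, s j using Nat.strong_induction_on generalizing s with
    | _ n ih =>
    by_cases hs : ∀ j ∈ J, s j ≤ 1
    · exact ⟨monomial s c, (monomial_mem_restrictSupport R).2 (.inl hs), by simp⟩
    obtain ⟨j, hj, hsj⟩ : ∃ j ∈ J, 1 < s j := by simpa using hs
    obtain ⟨b, hbJ, hb⟩ := hJ j hj
    rw [X_pow_eq_monomial] at hb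
    obtain ⟨t, rfl⟩ : ∃ t, s = t + Finsupp.single j 2 :=
      ⟨s - Finsupp.single j 2, (tsub_add_cancel_of_le (Finsupp.single_le_iff.2 hsj)).symm⟩
    have hlt : ∑ k ∈ J, (t + b) k < n := by
      simp only [← hn, Finsupp.coe_add, Pi.add_apply, Finset.sum_add_distrib,
        Finset.sum_eq_zero hbJ, Finsupp.single_apply, Finset.sum_ite_eq, if_pos hj]
      omega
    obtain ⟨r, hr, hmem⟩ := ih _ hlt (t + b) rfl
    refine ⟨r, hr, ?_⟩
    simpa using add_mem (monomial_add_sub_monomial_add_mem hb t c) hmem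
  | add p q hp hq =>
    obtain ⟨r, hr, hpr⟩ := hp
    obtain ⟨r', hr', hqr'⟩ := hq
    exact ⟨r + r', add_mem hr hr', by simpa [add_sub_add_comm] using add_mem hpr hqr'⟩

end Reduction

end MvPolynomial

open Finsupp in
noncomputable def toricExponents : Fin 5 → Fin 3 →₀ ℕ :=
  ![single 0 2, single 1 2, single 2 2, single 0 1 + single 1 1, single 1 1 + single 2 1]

theorem linearCombination_toricExponents_apply (s : Fin 5 →₀ ℕ) :
    Finsupp.linearCombination ℕ toricExponents s 0 = 2 * s 0 + s 3 ∧
      Finsupp.linearCombination ℕ toricExponents s 1 = 2 * s 1 + s 3 + s 4 ∧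
      Finsupp.linearCombination ℕ toricExponents s 2 = 2 * s 2 + s 4 := by
  simp [Finsupp.linearCombination_apply, Finsupp.sum_fintype, Fin.sum_univ_five, toricExponents,
    mul_comm]

theorem toricExponents_injOn :
    {s : Fin 5 →₀ ℕ | ∀ j ∈ ({3, 4} : Finset (Fin 5)), s j ≤ 1}.InjOn
      (Finsupp.linearCombination ℕ toricExponents) := by
  intro s hs t ht hst
  obtain ⟨hs0, hs1, hs2⟩ := linearCombination_toricExponents_apply s
  obtain ⟨ht0, ht1, ht2⟩ := linearCombination_toricExponents_apply t
  simp only [Finset.mem_insert, Finset.mem_singleton, forall_eq_or_imp, forall_eq,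
    Set.mem_ofPred_eq] at hs ht
  rw [hst] at hs0 hs1 hs2
  ext i
  match i with
  | 0 | 1 | 2 | 3 | 4 => omega

section Toric

variable (R : Type*) [CommRing R]

noncomputable def toricIdeal : Ideal (MvPolynomial (Fin 5) R) :=
  Ideal.span {X 0 * X 1 - X 3 ^ 2, X 1 * X 2 - X 4 ^ 2}

noncomputable def toricMap : MvPolynomial (Fin 5) R →ₐ[R] MvPolynomial (Fin 3) R :=
  aeval fun i => monomial (toricExponents i) 1

theorem toricIdeal_le_ker : toricIdeal R ≤ RingHom.ker (toricMap R) := by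
  rw [toricIdeal, Ideal.span_le, Set.insert_subset_iff, Set.singleton_subset_iff]
  simp [toricMap, monomial_mul, monomial_pow, toricExponents]

open Finsupp in
theorem exists_sq_sub_monomial_mem_toricIdeal :
    ∀ j ∈ ({3, 4} : Finset (Fin 5)), ∃ b : Fin 5 →₀ ℕ,
      (∀ k ∈ ({3, 4} : Finset (Fin 5)), b k = 0) ∧ X j ^ 2 - monomial b 1 ∈ toricIdeal R := by
  simp only [Finset.mem_insert, Finset.mem_singleton, forall_eq_or_imp, forall_eq]
  refine ⟨⟨single 0 1 + single 1 1, by simp, ?_⟩, ⟨single 1 1 + single 2 1, by simp, ?_⟩⟩ <;>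
    rw [← neg_mem_iff, neg_sub, monomial_single_add, pow_one]
  exacts [Ideal.subset_span (Set.mem_insert _ _), Ideal.subset_span (Set.mem_insert_of_mem _ rfl)]

theorem toricIdeal_eq_ker : toricIdeal R = RingHom.ker (toricMap R) :=
  Ideal.eq_ker_of_forall_exists_sub_mem _ _ (toricIdeal_le_ker R)
    (fun _ hr => eq_zero_of_aeval_monomial_eq_zero _ toricExponents_injOn hr)
    (exists_sub_mem_restrictSupport_of_sq_sub_monomial_mem _
      (exists_sq_sub_monomial_mem_toricIdeal R))

end Toric

/-- The ideal `(x₁x₂ − x₄², x₂x₃ − x₅²)` of `ℚ[x₁, …, x₅]` (with `xᵢ = X (i-1)`)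
is a prime ideal. -/
theorem toric_binomial_ideal_isPrime :
    (Ideal.span {(X 0 * X 1 - X 3 ^ 2 : MvPolynomial (Fin 5) ℚ),
        X 1 * X 2 - X 4 ^ 2}).IsPrime :=
  show (toricIdeal ℚ).IsPrime from toricIdeal_eq_ker ℚ ▸ RingHom.ker_isPrime _
end

section
/- Let A = ℚ[x₁, …, x₆] be the polynomial ring in six variables over ℚ and let I = (x₁x₂ − x₄², x₂x₃ − x₅², x₄x₆, x₅x₆). Then the Krull dimension of the quotient ring A/I equals 3. -/
/-!
Writing `xᵢ` for the image of `X i`: setting `x₁ = x₃ = x₄ = 0` maps `A/I` onto the polynomial ring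
in `x₀, x₂, x₅`, so `dim A/I ≥ 3`. Conversely `A/I` is integral over the subring generated by the
`xᵢ + x₅` (`i = 0, 1, 2`): `x₅ (x₅ - (x₀ + x₅)) (x₅ - (x₁ + x₅)) = x₀ x₁ x₅ = x₃² x₅ = 0`, after
which `x₀, x₁, x₂` are integral, and `x₃, x₄` are square roots of `x₀ x₁, x₁ x₂`. Prime chains
contract strictly along integral extensions, so `dim A/I ≤ 3`.
-/

open MvPolynomial

theorem ringKrullDim_le_of_isIntegral {R S : Type*} [CommRing R] [CommRing S] [Algebra R S]
    [Algebra.IsIntegral R S] : ringKrullDim S ≤ ringKrullDim R := by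
  refine Order.krullDim_le_of_strictMono
    (fun p : PrimeSpectrum S ↦ ⟨p.asIdeal.comap (algebraMap R S), inferInstance⟩) ?_
  intro p q hpq
  obtain ⟨s, hsq, hsp⟩ := SetLike.exists_of_lt (show p.asIdeal < q.asIdeal from hpq)
  exact Ideal.comap_lt_comap_of_integral_mem_sdiff hpq.le ⟨hsq, hsp⟩
    (Algebra.IsIntegral.isIntegral s)

theorem Algebra.isIntegral_of_surjective_mvPolynomial {σ K R S : Type*} [CommRing K]
    [CommRing R] [CommRing S] [Algebra R S] (f : MvPolynomial σ K →+* S)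
    (hf : Function.Surjective f) (hC : ∀ k, IsIntegral R (f (C k)))
    (hX : ∀ i, IsIntegral R (f (X i))) : Algebra.IsIntegral R S := by
  refine ⟨fun s ↦ ?_⟩
  obtain ⟨q, rfl⟩ := hf s
  induction q using MvPolynomial.induction_on with
  | C k => exact hC k
  | add p q hp hq => simpa only [map_add] using hp.add hq
  | mul_X p i hp => simpa only [map_mul] using hp.mul (hX i)

noncomputable section

namespace ToricFaceRing

variable (K : Type*) [CommRing K]

abbrev toricIdeal : Ideal (MvPolynomial (Fin 6) K) :=
  Ideal.span {X 0 * X 1 - X 3 ^ 2, X 1 * X 2 - X 4 ^ 2, X 3 * X 5, X 4 * X 5}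

abbrev ToricRing : Type _ := MvPolynomial (Fin 6) K ⧸ toricIdeal K

variable {K}

abbrev x (i : Fin 6) : ToricRing K := Ideal.Quotient.mk _ (X i)

theorem x_relations :
    x 0 * x 1 - x 3 ^ 2 = (0 : ToricRing K) ∧ x 1 * x 2 - x 4 ^ 2 = (0 : ToricRing K) ∧
      x 3 * x 5 = (0 : ToricRing K) ∧ x 4 * x 5 = (0 : ToricRing K) := by
  simp only [x, ← map_mul, ← map_pow, ← map_sub, Ideal.Quotient.eq_zero_iff_mem]
  refine ⟨?_, ?_, ?_, ?_⟩ <;> exact Ideal.subset_span (by simp)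

def toMvPolynomial : ToricRing K →+* MvPolynomial (Fin 3) K :=
  Ideal.Quotient.lift _ (aeval ![X 0, 0, X 1, 0, 0, X 2]).toRingHom <| by
    intro a ha
    refine (Ideal.span_le (I := RingHom.ker _)).mpr ?_ ha
    simp [Set.insert_subset_iff]

theorem toMvPolynomial_surjective : Function.Surjective (toMvPolynomial (K := K)) := by
  intro y
  refine ⟨Ideal.Quotient.mk _ (rename ![0, 2, 5] y), ?_⟩
  have hX : (![X 0, 0, X 1, 0, 0, X 2] : Fin 6 → MvPolynomial (Fin 3) K) ∘ ![0, 2, 5] = X := by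
    ext1 i
    fin_cases i <;> rfl
  simp only [toMvPolynomial, Ideal.Quotient.lift_mk, AlgHom.toRingHom_eq_coe, RingHom.coe_coe]
  rw [aeval_rename, hX, aeval_X_left_apply]

instance : Algebra (MvPolynomial (Fin 3) K) (ToricRing K) :=
  (aeval ![x 0 + x 5, x 1 + x 5, x 2 + x 5]).toAlgebra

theorem algebraMap_X (i : Fin 3) :
    algebraMap (MvPolynomial (Fin 3) K) (ToricRing K) (X i) =
      ![x 0 + x 5, x 1 + x 5, x 2 + x 5] i :=
  aeval_X _ i

theorem isIntegral_x_five : IsIntegral (MvPolynomial (Fin 3) K) (x 5 : ToricRing K) := by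
  obtain ⟨h01, -, h35, -⟩ := x_relations (K := K)
  refine ⟨Polynomial.X * (Polynomial.X - Polynomial.C (X 0)) * (Polynomial.X - Polynomial.C (X 1)),
    (Polynomial.monic_X.mul (Polynomial.monic_X_sub_C _)).mul (Polynomial.monic_X_sub_C _), ?_⟩
  simp only [Polynomial.eval₂_mul, Polynomial.eval₂_sub, Polynomial.eval₂_X, Polynomial.eval₂_C,
    algebraMap_X, Matrix.cons_val_zero, Matrix.cons_val_one]
  linear_combination x 5 * h01 + x 3 * h35

instance : Algebra.IsIntegral (MvPolynomial (Fin 3) K) (ToricRing K) := by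
  obtain ⟨h01, h12, -, -⟩ := x_relations (K := K)
  have h5 := isIntegral_x_five (K := K)
  have of_add_x5 {a : ToricRing K} (i : Fin 3)
      (h : algebraMap (MvPolynomial (Fin 3) K) (ToricRing K) (X i) = a + x 5) :
      IsIntegral (MvPolynomial (Fin 3) K) a := by
    rw [eq_sub_of_add_eq h.symm]
    exact isIntegral_algebraMap.sub h5
  have h0 := of_add_x5 0 (algebraMap_X 0)
  have h1 := of_add_x5 1 (algebraMap_X 1)
  have h2 := of_add_x5 2 (algebraMap_X 2)
  have h3 : IsIntegral (MvPolynomial (Fin 3) K) (x 3 : ToricRing K) :=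
    IsIntegral.of_pow two_pos (by rw [← sub_eq_zero.mp h01]; exact h0.mul h1)
  have h4 : IsIntegral (MvPolynomial (Fin 3) K) (x 4 : ToricRing K) :=
    IsIntegral.of_pow two_pos (by rw [← sub_eq_zero.mp h12]; exact h1.mul h2)
  refine Algebra.isIntegral_of_surjective_mvPolynomial (Ideal.Quotient.mk _)
    Ideal.Quotient.mk_surjective (fun k ↦ ?_) (fun i ↦ ?_)
  · have hC : algebraMap (MvPolynomial (Fin 3) K) (ToricRing K) (C k) =
        Ideal.Quotient.mk _ (C k) := aeval_C _ k
    exact hC ▸ isIntegral_algebraMap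
  · fin_cases i
    exacts [h0, h1, h2, h3, h4, h5]

variable [IsNoetherianRing K]

theorem ringKrullDim_eq : ringKrullDim (ToricRing K) = ringKrullDim K + 3 := by
  have hpoly : ringKrullDim (MvPolynomial (Fin 3) K) = ringKrullDim K + 3 := by
    simp
  refine le_antisymm ?_ ?_
  · exact hpoly ▸ ringKrullDim_le_of_isIntegral
  · exact hpoly ▸ ringKrullDim_le_of_surjective _ toMvPolynomial_surjective

end ToricFaceRing

end

/-- Let `A = ℚ[x₁, …, x₆]` (with `xᵢ = X (i-1)`) and
`I = (x₁x₂ − x₄², x₂x₃ − x₅², x₄x₆, x₅x₆)`. Then the Krull dimension of the toric face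
ring `A/I` equals `3`. -/
theorem toric_face_ring_krullDim :
    ringKrullDim (MvPolynomial (Fin 6) ℚ ⧸
      Ideal.span {(X 0 * X 1 - X 3 ^ 2 : MvPolynomial (Fin 6) ℚ),
        X 1 * X 2 - X 4 ^ 2, X 3 * X 5, X 4 * X 5}) = 3 := by
  rw [ToricFaceRing.ringKrullDim_eq, ringKrullDim_eq_zero_of_field, zero_add]
end

section
/- Let A = ℚ[x₁, …, x₅, y₁, …, y₅] be the polynomial ring in ten variables over ℚ, and let J = (x₁y₂ − x₂y₁, x₂y₃ − x₃y₂, x₃y₄ − x₄y₃, x₄y₅ − x₅y₄) be the binomial edge ideal of the path graph on 5 vertices. Then the Krull dimension of the quotient ring A/J equals 6. -/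
/-!
The lower bound comes from the prime `(x₂, y₂, x₄, y₄) ⊇ J`, whose quotient is a polynomial ring
in six variables.

For the upper bound, a strict chain of primes `P₀ < P₁ < ⋯ < Pₘ` produces `m` elements that are
algebraically independent modulo `P₀`: an element of `P₁ \ P₀` is transcendental modulo `P₀` over
any family that is algebraically independent modulo `P₁`. So `dim A/J` is at most the
transcendence degree of `A/P` for primes `P ⊇ J`. Modulo such a prime the columns `(xᵢ, yᵢ)` of
the matrix of variables live in a domain and adjacent columns are proportional, so every maximal
run of nonzero columns is algebraic over one element more than its length. Zero columns separate
the runs, hence at most `5 + 1` elements suffice.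
-/

open MvPolynomial Algebra

section KrullDimTrdeg

variable {K B : Type*} [Field K] [CommRing B] [Algebra K B]

theorem AlgebraicIndependent.exists_option_elim_of_lt {P Q : Ideal B} [P.IsPrime] (hPQ : P < Q)
    {ι : Type*} {x : ι → B} (hx : AlgebraicIndependent K (Ideal.Quotient.mk Q ∘ x)) :
    ∃ a : B, AlgebraicIndependent K (fun o : Option ι ↦ Ideal.Quotient.mk P (o.elim a x)) := by
  obtain ⟨a, haQ, haP⟩ := SetLike.exists_of_lt hPQ
  set φ := Ideal.Quotient.factorₐ K hPQ.le
  have hxP : AlgebraicIndependent K (Ideal.Quotient.mk P ∘ x) := .of_comp φ hx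
  refine ⟨a, ?_⟩
  have hcomp : (fun o : Option ι ↦ Ideal.Quotient.mk P (o.elim a x)) =
      fun o ↦ o.elim (Ideal.Quotient.mk P a) (Ideal.Quotient.mk P ∘ x) := by
    funext o; cases o <;> rfl
  rw [hcomp, AlgebraicIndependent.option_iff]
  refine ⟨hxP, fun halg ↦ ?_⟩
  -- algebraicity of `a` makes a nonzero `r ∈ K[x]` a multiple of `a`, so `r` vanishes modulo `Q`
  obtain ⟨t, -, r, hr0, hr⟩ := halg.exists_nonzero_eq_adjoin_mul
    (mem_nonZeroDivisors_of_ne_zero (by simpa [Ideal.Quotient.eq_zero_iff_mem] using haP))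
  obtain ⟨q, hq⟩ := (adjoin_range_eq_range_aeval K _).le r.2
  have hφr : φ r = 0 := by
    have := congrArg φ hr
    rw [map_mul, show φ (Ideal.Quotient.mk P a) = 0 from
      (Ideal.Quotient.eq_zero_iff_mem).mpr haQ, zero_mul] at this
    exact this.symm
  have : q = 0 := hx.eq_zero_of_aeval_eq_zero q <| by
    rw [← hφr, ← hq]
    exact (comp_aeval_apply (f := Ideal.Quotient.mk P ∘ x) φ q).symm
  exact hr0 (Subtype.ext (by simp [← hq, this]))

theorem LTSeries.exists_algebraicIndependent_quotient_head (p : LTSeries (PrimeSpectrum B)) :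
    ∃ x : Fin p.length → B, AlgebraicIndependent K (Ideal.Quotient.mk p.head.asIdeal ∘ x) := by
  induction p using RelSeries.inductionOn with
  | singleton P =>
    let e := finCongr (RelSeries.singleton_length {(a, b) : PrimeSpectrum B × _ | a < b} P)
    exact ⟨Fin.elim0 ∘ e, (algebraicIndependent_empty_type (x := _ ∘ Fin.elim0)).comp e e.injective⟩
  | cons p P hP ih =>
    obtain ⟨x, hx⟩ := ih
    obtain ⟨a, ha⟩ := hx.exists_option_elim_of_lt (P := P.asIdeal) hP
    let e : Fin (p.cons P hP).length ≃ Option (Fin p.length) :=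
      (finCongr (by simp)).trans (finSuccEquiv p.length)
    exact ⟨fun i ↦ (e i).elim a x, ha.comp e e.injective⟩

theorem ringKrullDim_le_of_forall_trdeg_le {n : ℕ}
    (h : ∀ P : Ideal B, P.IsPrime → trdeg K (B ⧸ P) ≤ n) : ringKrullDim B ≤ n := by
  refine iSup_le fun p ↦ ?_
  obtain ⟨x, hx⟩ := p.exists_algebraicIndependent_quotient_head (K := K)
  have := hx.lift_cardinalMk_le_trdeg.trans (Cardinal.lift_le.mpr (h _ p.head.isPrime))
  simp only [Cardinal.mk_fin, Cardinal.lift_natCast, Nat.cast_le] at this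
  exact_mod_cast this

end KrullDimTrdeg

section PathRelations

variable {K D : Type*} [Field K] [CommRing D] [Algebra K D]

theorem IsAlgebraic.of_mul_eq_mul [IsDomain D] {R : Subalgebra K D} {a b c d : D} (ha0 : a ≠ 0)
    (ha : IsAlgebraic R a) (hb : IsAlgebraic R b) (hc : IsAlgebraic R c) (h : a * d = c * b) :
    IsAlgebraic R d :=
  .of_mul (mem_nonZeroDivisors_of_ne_zero ha0) ha (h ▸ hc.mul hb)

variable (K) in
def ColumnsAlgebraicOver (s : Set D) (x y : ℕ → D) (n : ℕ) : Prop :=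
  ∀ i < n, IsAlgebraic (adjoin K s) (x i) ∧ IsAlgebraic (adjoin K s) (y i)

theorem ColumnsAlgebraicOver.mono {s t : Set D} {x y : ℕ → D} {n : ℕ} (hst : s ⊆ t)
    (h : ColumnsAlgebraicOver K s x y n) : ColumnsAlgebraicOver K t x y n := fun i hi ↦
  ⟨(h i hi).1.tower_top_of_subalgebra_le (adjoin_mono hst),
    (h i hi).2.tower_top_of_subalgebra_le (adjoin_mono hst)⟩

theorem ColumnsAlgebraicOver.succ {s : Set D} {x y : ℕ → D} {n : ℕ}
    (h : ColumnsAlgebraicOver K s x y n) (hx : IsAlgebraic (adjoin K s) (x n))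
    (hy : IsAlgebraic (adjoin K s) (y n)) : ColumnsAlgebraicOver K s x y (n + 1) := by
  intro i hi
  rcases Nat.lt_succ_iff_lt_or_eq.mp hi with hi | rfl
  exacts [h i hi, ⟨hx, hy⟩]

theorem isAlgebraic_adjoin_of_mem [Nontrivial D] {s : Set D} {a : D} (ha : a ∈ s) :
    IsAlgebraic (adjoin K s) a :=
  isAlgebraic_algebraMap (⟨a, subset_adjoin ha⟩ : adjoin K s)

theorem ColumnsAlgebraicOver.exists_insert_succ [IsDomain D] {s : Set D} {x y : ℕ → D} {m : ℕ}
    (h : ColumnsAlgebraicOver K s x y (m + 1)) (hrel : x m * y (m + 1) = x (m + 1) * y m)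
    (hm : x m ≠ 0 ∨ y m ≠ 0) : ∃ a, ColumnsAlgebraicOver K (insert a s) x y (m + 2) := by
  rcases hm with hx | hy
  · have h := h.mono (Set.subset_insert (x (m + 1)) _)
    refine ⟨x (m + 1), h.succ (isAlgebraic_adjoin_of_mem (Set.mem_insert _ _)) ?_⟩
    exact (h m m.lt_succ_self).1.of_mul_eq_mul hx (h m m.lt_succ_self).2
      (isAlgebraic_adjoin_of_mem (Set.mem_insert _ _)) hrel
  · have h := h.mono (Set.subset_insert (y (m + 1)) _)
    refine ⟨y (m + 1), h.succ ?_ (isAlgebraic_adjoin_of_mem (Set.mem_insert _ _))⟩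
    exact (h m m.lt_succ_self).2.of_mul_eq_mul hy (h m m.lt_succ_self).1
      (isAlgebraic_adjoin_of_mem (Set.mem_insert _ _)) (by linear_combination -hrel)

-- A zero column costs nothing and cuts the path; a column after a nonzero one costs one element.
theorem exists_card_le_columnsAlgebraicOver [IsDomain D] (x y : ℕ → D) (n : ℕ)
    (h : ∀ i, i + 1 < n → x i * y (i + 1) = x (i + 1) * y i) :
    ∃ s : Finset D, s.card ≤ n + 1 ∧ ColumnsAlgebraicOver K s x y n := by
  classical
  induction n using Nat.strong_induction_on with
  | _ n ih =>
  match n with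
  | 0 => exact ⟨∅, by simp, fun i hi ↦ absurd hi (Nat.not_lt_zero i)⟩
  | 1 =>
    refine ⟨{x 0, y 0}, Finset.card_le_two, ?_⟩
    rw [Finset.coe_pair]
    exact ColumnsAlgebraicOver.succ (fun i hi ↦ absurd hi (Nat.not_lt_zero i))
      (isAlgebraic_adjoin_of_mem (Set.mem_insert _ _))
      (isAlgebraic_adjoin_of_mem (Set.mem_insert_of_mem _ rfl))
  | m + 2 =>
    by_cases hm : x m = 0 ∧ y m = 0
    · obtain ⟨s, hs, hcols⟩ := ih m (by omega) fun i hi ↦ h i (by omega)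
      refine ⟨insert (x (m + 1)) (insert (y (m + 1)) s),
        (Finset.card_insert_le _ _).trans (by grw [Finset.card_insert_le]; omega), ?_⟩
      rw [Finset.coe_insert, Finset.coe_insert]
      refine ((hcols.mono ?_).succ ?_ ?_).succ (isAlgebraic_adjoin_of_mem (Set.mem_insert _ _))
        (isAlgebraic_adjoin_of_mem (Set.mem_insert_of_mem _ (Set.mem_insert _ _)))
      · exact (Set.subset_insert _ _).trans (Set.subset_insert _ _)
      · exact hm.1 ▸ isAlgebraic_zero
      · exact hm.2 ▸ isAlgebraic_zero
    · obtain ⟨s, hs, hcols⟩ := ih (m + 1) (by omega) fun i hi ↦ h i (by omega)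
      obtain ⟨a, ha⟩ := hcols.exists_insert_succ (h m (by omega)) (not_and_or.mp hm)
      refine ⟨insert a s, (Finset.card_insert_le _ _).trans (by omega), ?_⟩
      rwa [Finset.coe_insert]

theorem trdeg_le_of_adjacent_minors [IsDomain D] {n : ℕ}
    (π : MvPolynomial (Fin n ⊕ Fin n) K →ₐ[K] D) (hπ : Function.Surjective π)
    (h : ∀ i j : Fin n, (j : ℕ) = i + 1 →
      π (X (.inl i)) * π (X (.inr j)) = π (X (.inl j)) * π (X (.inr i))) :
    trdeg K D ≤ (n + 1 : ℕ) := by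
  let x : ℕ → D := fun i ↦ if hi : i < n then π (X (.inl ⟨i, hi⟩)) else 0
  let y : ℕ → D := fun i ↦ if hi : i < n then π (X (.inr ⟨i, hi⟩)) else 0
  obtain ⟨s, hs, hcols⟩ := exists_card_le_columnsAlgebraicOver (K := K) x y n fun i hi ↦ by
    simp only [x, y, dif_pos hi, dif_pos (Nat.lt_of_succ_lt hi)]
    exact h ⟨i, _⟩ ⟨i + 1, hi⟩ rfl
  have hX : ∀ v, IsAlgebraic (adjoin K (s : Set D)) (π (X v)) := by
    rintro (i | i)
    · simpa [x, i.2] using (hcols i i.2).1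
    · simpa [y, i.2] using (hcols i i.2).2
  have : Algebra.IsAlgebraic (adjoin K (s : Set D)) D := by
    let C := (Subalgebra.algebraicClosure (adjoin K (s : Set D)) D).restrictScalars K
    have hC : C.comap π = ⊤ := by
      rw [_root_.eq_top_iff, ← adjoin_range_X, adjoin_le_iff]
      rintro _ ⟨v, rfl⟩
      exact hX v
    refine ⟨fun d ↦ ?_⟩
    obtain ⟨f, rfl⟩ := hπ d
    exact (hC ▸ Algebra.mem_top : f ∈ C.comap π)
  calc trdeg K D ≤ Cardinal.mk (s : Set D) := Algebra.IsAlgebraic.trdeg_le_cardinalMk K (s : Set D)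
    _ ≤ (n + 1 : ℕ) := by simpa using Nat.cast_le.mpr hs

theorem ringKrullDim_quotient_le_of_adjacent_minors_mem {n : ℕ}
    {I : Ideal (MvPolynomial (Fin n ⊕ Fin n) K)}
    (hI : ∀ i j : Fin n, (j : ℕ) = i + 1 → X (.inl i) * X (.inr j) - X (.inl j) * X (.inr i) ∈ I) :
    ringKrullDim (MvPolynomial (Fin n ⊕ Fin n) K ⧸ I) ≤ (n + 1 : ℕ) := by
  refine ringKrullDim_le_of_forall_trdeg_le (K := K) fun P _ ↦ ?_
  let π := (Ideal.Quotient.mkₐ K P).comp (Ideal.Quotient.mkₐ K I)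
  refine trdeg_le_of_adjacent_minors π ((Ideal.Quotient.mkₐ_surjective K P).comp
    (Ideal.Quotient.mkₐ_surjective K I)) fun i j hij ↦ ?_
  rw [← sub_eq_zero, ← map_mul, ← map_mul, ← map_sub]
  simp [π, Ideal.Quotient.eq_zero_iff_mem.mpr (hI i j hij)]

end PathRelations

theorem natCard_le_ringKrullDim_quotient {K : Type*} [Field K] {σ τ : Type*} [Finite τ]
    {I : Ideal (MvPolynomial σ K)} (φ : MvPolynomial σ K →ₐ[K] MvPolynomial τ K)
    (hφ : Function.Surjective φ) (hI : I ≤ RingHom.ker φ) :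
    (Nat.card τ : WithBot ℕ∞) ≤ ringKrullDim (MvPolynomial σ K ⧸ I) := by
  have hφI : ∀ f ∈ I, (φ : MvPolynomial σ K →+* MvPolynomial τ K) f = 0 := fun _ h ↦ hI h
  have := ringKrullDim_le_of_surjective _ (Ideal.Quotient.lift_surjective_of_surjective I hφI hφ)
  simpa [ringKrullDim_eq_zero_of_field] using this

/-- Let `A = ℚ[x₁, …, x₅, y₁, …, y₅]` (with `xᵢ = X (Sum.inl (i-1))` and
`yᵢ = X (Sum.inr (i-1))`) and let
`J = (x₁y₂ − x₂y₁, x₂y₃ − x₃y₂, x₃y₄ − x₄y₃, x₄y₅ − x₅y₄)` be the binomial edge ideal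
of the path graph on `5` vertices. Then the Krull dimension of `A/J` equals `6`. -/
theorem binomial_edge_ideal_path_krullDim :
    ringKrullDim (MvPolynomial (Fin 5 ⊕ Fin 5) ℚ ⧸
      Ideal.span {(X (Sum.inl 0) * X (Sum.inr 1) - X (Sum.inl 1) * X (Sum.inr 0) :
          MvPolynomial (Fin 5 ⊕ Fin 5) ℚ),
        X (Sum.inl 1) * X (Sum.inr 2) - X (Sum.inl 2) * X (Sum.inr 1),
        X (Sum.inl 2) * X (Sum.inr 3) - X (Sum.inl 3) * X (Sum.inr 2),
        X (Sum.inl 3) * X (Sum.inr 4) - X (Sum.inl 4) * X (Sum.inr 3)}) = 6 := by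
  refine le_antisymm ?_ ?_
  · refine (ringKrullDim_quotient_le_of_adjacent_minors_mem fun i j hij ↦ ?_).trans (by norm_num)
    apply Ideal.subset_span
    fin_cases i <;> fin_cases j <;> simp_all
  let φ : MvPolynomial (Fin 5 ⊕ Fin 5) ℚ →ₐ[ℚ] MvPolynomial (Fin 3 ⊕ Fin 3) ℚ :=
    aeval (Sum.elim ![X (.inl 0), 0, X (.inl 1), 0, X (.inl 2)]
      ![X (.inr 0), 0, X (.inr 1), 0, X (.inr 2)])
  have hφ : Function.Surjective φ := by
    rw [← AlgHom.range_eq_top, _root_.eq_top_iff, ← adjoin_range_X, adjoin_le_iff]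
    rintro _ ⟨v, rfl⟩
    rcases v with i | i <;> fin_cases i
    exacts [⟨X (.inl 0), by simp [φ]⟩, ⟨X (.inl 2), by simp [φ]⟩, ⟨X (.inl 4), by simp [φ]⟩,
      ⟨X (.inr 0), by simp [φ]⟩, ⟨X (.inr 2), by simp [φ]⟩, ⟨X (.inr 4), by simp [φ]⟩]
  calc (6 : WithBot ℕ∞) = Nat.card (Fin 3 ⊕ Fin 3) := by simp
    _ ≤ _ := natCard_le_ringKrullDim_quotient φ hφ ?_
  simp only [Ideal.span_le, Set.insert_subset_iff, Set.singleton_subset_iff, SetLike.mem_coe,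
    RingHom.mem_ker]
  simp [φ]
end
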